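/- arXiv:1503.08995 — 3 statements merged into one kernel-verified Lean document; each statement's English description precedes it below -/
import Mathlib

section
/- For all positive integers n, m, r the following equalities of subsets of S_{n+m+r} hold: (1) {f∘(g×1_r) : f ∈ Sh^≻(n+m,r), g ∈ Sh(n,m)} = {f∘(1_n×g) : f ∈ Sh^≻(n,m+r), g ∈ Sh^≻(m,r)}; (2) {f∘(g×1_r) : f ∈ Sh^≺(n+m,r), g ∈ Sh^≻(n,m)} = {f∘(1_n×g) : f ∈ Sh^≻(n,m+r), g ∈ Sh^≺(m,r)}; (3) {f∘(g×1_r) : f ∈ Sh^≺(n+m,r), g ∈ Sh^≺(n,m)} = {f∘(1_n×g) : f ∈ Sh^≺(n,m+r), g ∈ Sh(m,r)}; where 1_k denotes the identity permutation of S_k. -/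
open scoped TensorProduct

namespace SurjPerm

/-- The maximal value of a word (the `r` such that a surjection lands in `{1,…,r}`). -/
def rk (l : List ℕ) : ℕ := l.foldr max 0

/-- `l` is (the list of values of) a surjective map `{1,…,n} → {1,…,r}`
    with `n = l.length ≥ 1` and `r = rk l`. -/
def IsST (l : List ℕ) : Prop := l ≠ [] ∧ ∀ k, k ∈ l ↔ 1 ≤ k ∧ k ≤ rk l

/-- membership in `ST_n^r`. -/
def memST (l : List ℕ) (n r : ℕ) : Prop := IsST l ∧ l.length = n ∧ rk l = r

/-- concatenation `x × y`. -/
def cat (x y : List ℕ) : List ℕ := x ++ y.map (· + rk x)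

/-- iterated concatenation `x¹ × x² × … × xᵖ`. -/
def catAll (l : List (List ℕ)) : List ℕ := l.foldr cat []

/-- standardization of a word. -/
def stdList (l : List ℕ) : List ℕ := l.map fun v => (l.dedup.filter (· ≤ v)).length

/-- corestriction `x|^K`. -/
def corestrict (x : List ℕ) (K : Finset ℕ) : List ℕ := stdList (x.filter (· ∈ K))

/-- the `i`-th entry of a word, `1`-indexed: `ent f i = f(i)`. -/
def ent (l : List ℕ) (i : ℕ) : ℕ := l.getD (i - 1) 0

/-- composition `f ∘ x` of the map (word) `f` with the map (word) `x`. -/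
def wcomp (f x : List ℕ) : List ℕ := x.map fun v => ent f v

/-- the identity permutation `1_n` as a word. -/
def idW (n : ℕ) : List ℕ := (List.range n).map (· + 1)

/-- the permutation `ε(r₁,…,r_p)` as a word: the `i`-th block of positions
    carries the values shifted above all later blocks. -/
def epsW : List ℕ → List ℕ
  | [] => []
  | r :: rs => ((List.range r).map (· + rs.sum + 1)) ++ epsW rs

/-- `x \ y := ε(r,s) ∘ (x × y)`. -/
def bsl (x y : List ℕ) : List ℕ := wcomp (epsW [rk x, rk y]) (cat x y)

/-- `f` is strictly increasing on each block of the composition `ns`. -/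
def blockIncr (ns f : List ℕ) : Prop :=
  ∀ k, k < ns.length → ∀ i j, (ns.take k).sum < i → i < j → j ≤ (ns.take (k + 1)).sum →
    ent f i < ent f j

/-- `(n₁,…,n_p)`-stuffles. -/
def IsStuffle (ns f : List ℕ) : Prop := IsST f ∧ f.length = ns.sum ∧ blockIncr ns f

/-- `(n₁,…,n_p)`-shuffles: stuffles which are permutations. -/
def IsShuffle (ns f : List ℕ) : Prop := IsStuffle ns f ∧ rk f = ns.sum

/-- irreducible surjections. -/
def Irr (l : List ℕ) : Prop := IsST l ∧ ¬ ∃ g h, IsST g ∧ IsST h ∧ l = cat g h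

/-- the set of irreducible surjections of arity `n`. -/
def IrrN (n : ℕ) : Set (List ℕ) := {l | Irr l ∧ l.length = n}

/-- the product `x · y` on surjections. -/
def dotW (x y : List ℕ) : List ℕ :=
  x.map (fun v => if v < rk x then v else rk x + rk y - 1) ++
    y.map (fun v => if v < rk y then v + rk x - 1 else rk x + rk y - 1)

/-- iterated `·` product `x¹ · x² · … · xᵖ`. -/
def dotAll : List (List ℕ) → List ℕ
  | [] => []
  | a :: as => as.foldl dotW a

/-- indecomposable surjections (for the `·` product). -/
def Indec (l : List ℕ) : Prop := IsST l ∧ ¬ ∃ a b, IsST a ∧ IsST b ∧ l = dotW a b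

/-- the set `𝒟`. -/
def inD (x : List ℕ) : Prop :=
  IsST x ∧ ((x = [1] ∨ x = [1, 1]) ∨
    (3 ≤ x.length ∧ Irr x ∧
      ¬ ∃ y z, ∃ _ : y.length < x.length, inD y ∧ IsST z ∧ x = bsl y z))
termination_by x.length
decreasing_by assumption

/-- the set `𝒞`. -/
def inC (x : List ℕ) : Prop :=
  Irr x ∧
    ((∃ y z, ∃ _ : y.length < x.length, Irr y ∧ ¬ inC y ∧ IsST z ∧ x = bsl y z) ∨
      (∃ a b, IsST a ∧ IsST b ∧ x = dotW a b))
termination_by x.length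
decreasing_by assumption

/-- the set `𝔅(l)`, with `𝔅(0) = 𝒟`. -/
def inBfrak (l : ℕ) (x : List ℕ) : Prop :=
  if l = 0 then inD x else ∃ u v, inD u ∧ IsST v ∧ v.length = l ∧ x = bsl u v

/-- `t_i ∘ f`: exchange the values `i` and `i+1`. -/
def swapVal (i : ℕ) (l : List ℕ) : List ℕ :=
  l.map fun v => if v = i then i + 1 else if v = i + 1 then i else v

/-- covering relation of the weak Bruhat order on `ST_n^r`:
    `f < t_i ∘ f` whenever `f⁻¹(i) < f⁻¹(i+1)`. -/
def wBCov (f g : List ℕ) : Prop :=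
  ∃ i, 1 ≤ i ∧ i + 1 ≤ rk f ∧ g = swapVal i f ∧
    ∀ a b, a < f.length → b < f.length → f.getD a 0 = i → f.getD b 0 = i + 1 → a < b

/-- strict weak Bruhat order. -/
def wBlt : List ℕ → List ℕ → Prop := Relation.TransGen wBCov

/-- weak Bruhat order. -/
def wBle : List ℕ → List ℕ → Prop := Relation.ReflTransGen wBCov

/-- the (0-indexed) positions `j₁-1 < … < j_λ-1` where the maximal value is attained. -/
def maxPos (x : List ℕ) : List ℕ :=
  (List.range x.length).filter fun i => x.getD i 0 = rk x

/-- `λ(x)`. -/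
def lam (x : List ℕ) : ℕ := (maxPos x).length

/-- `𝕄(x) = (𝕄(x)_λ, …, 𝕄(x)₁)`. -/
def Mword (x : List ℕ) : List ℕ :=
  (List.zipWith (fun a b => b - a - 1) (maxPos x) ((maxPos x).drop 1) ++
    [x.length - (maxPos x).getLastD 0 - 1]).reverse

/-- the pieces `x|^{1..l₁}, x|^{l₁+1..l₂}, …, x|^{l_p+1..r}`. -/
def pieces (x : List ℕ) (ls : List ℕ) : List (List ℕ) :=
  ((0 :: ls).zip (ls ++ [rk x])).map fun p => corestrict x (Finset.Icc (p.1 + 1) p.2)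

/-- `x^{(l₁,…,l_p)}`. -/
def xfam (x : List ℕ) (ls : List ℕ) : List ℕ := catAll (pieces x ls)

variable (𝕂 : Type) [Field 𝕂]

/-- the vector space `𝕂[ST]` (with basis all words; only the basis elements in `ST` matter). -/
abbrev V := List ℕ →₀ 𝕂

/-- the coproduct `Δ`. -/
noncomputable def Delta : V 𝕂 →ₗ[𝕂] TensorProduct 𝕂 (V 𝕂) (V 𝕂) :=
  Finsupp.lsum 𝕂 fun x => LinearMap.toSpanSingleton 𝕂 _
    (∑ i ∈ Finset.Ico 1 (rk x),
      Finsupp.single (corestrict x (Finset.Icc 1 i)) (1 : 𝕂) ⊗ₜ[𝕂]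
        Finsupp.single (corestrict x (Finset.Icc (i + 1) (rk x))) (1 : 𝕂))

/-- the subspace `𝕂[ST_n]`. -/
noncomputable def STspanN (n : ℕ) : Submodule 𝕂 (V 𝕂) :=
  Submodule.span 𝕂 {v | ∃ l, IsST l ∧ l.length = n ∧ v = Finsupp.single l 1}

/-- `Prim(ST)_n = {v ∈ 𝕂[ST_n] : Δ v = 0}`. -/
noncomputable def PrimN (n : ℕ) : Submodule 𝕂 (V 𝕂) :=
  STspanN 𝕂 n ⊓ LinearMap.ker (Delta 𝕂)

/-- the projection `E`. -/
noncomputable def Emap : V 𝕂 →ₗ[𝕂] V 𝕂 :=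
  Finsupp.lsum 𝕂 fun x => LinearMap.toSpanSingleton 𝕂 _
    (∑ᶠ ls ∈ {ls : List ℕ | ls.Chain' (· < ·) ∧ ∀ l ∈ ls, 0 < l ∧ l < rk x},
      ((-1 : 𝕂) ^ ls.length) • Finsupp.single (xfam x ls) (1 : 𝕂))

/-- generic bilinear-on-basis operation indexed by a set of shuffles. -/
noncomputable def shOp (P : ℕ → ℕ → List ℕ → Prop) (a b : V 𝕂) : V 𝕂 :=
  Finsupp.sum a fun x cx => Finsupp.sum b fun y cy =>
    (cx * cy) • ∑ᶠ f ∈ {f : List ℕ | IsShuffle [rk x, rk y] f ∧ P (rk x) (rk y) f},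
      Finsupp.single (wcomp f (cat x y)) (1 : 𝕂)

/-- the dendriform operation `≻`. -/
noncomputable def succOp : V 𝕂 → V 𝕂 → V 𝕂 :=
  shOp 𝕂 fun r s f => ent f r < ent f (r + s)

/-- the dendriform operation `≺`. -/
noncomputable def precOp : V 𝕂 → V 𝕂 → V 𝕂 :=
  shOp 𝕂 fun r s f => ent f (r + s) < ent f r

/-- `ω^≺(y₁,…,y_k) = y₁ ≺ (y₂ ≺ (… ≺ y_k))`. -/
noncomputable def omPrec : List (V 𝕂) → V 𝕂
  | [] => 0
  | [a] => a
  | a :: as => precOp 𝕂 a (omPrec as)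

/-- `ω^≻(y₁,…,y_k) = ((y₁ ≻ y₂) ≻ …) ≻ y_k`. -/
noncomputable def omSucc : List (V 𝕂) → V 𝕂
  | [] => 0
  | a :: as => as.foldl (succOp 𝕂) a

/-- `ω^≺(l) ≻ x ≺ ω^≻(r)`, empty factors omitted. -/
noncomputable def mterm (x : V 𝕂) : List (V 𝕂) → List (V 𝕂) → V 𝕂
  | [], [] => x
  | [], r => precOp 𝕂 x (omSucc 𝕂 r)
  | l, [] => succOp 𝕂 (omPrec 𝕂 l) x
  | l, r => precOp 𝕂 (succOp 𝕂 (omPrec 𝕂 l) x) (omSucc 𝕂 r)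

/-- the brace operation `M^{ST}_{1k}(x; y₁,…,y_k)`. -/
noncomputable def braceM (x : V 𝕂) (ys : List (V 𝕂)) : V 𝕂 :=
  ∑ j ∈ Finset.range (ys.length + 1),
    ((-1 : 𝕂) ^ (ys.length - j)) • mterm 𝕂 x (ys.take j) (ys.drop j)

/-- generic bilinear-on-basis operation indexed by a set of stuffles, with `q`-weights
    `q^{s(f) - c}` where `s(f) = |f| - rk f`. -/
noncomputable def stOp (q : 𝕂) (c : ℕ) (P : ℕ → ℕ → List ℕ → Prop) (a b : V 𝕂) : V 𝕂 :=
  Finsupp.sum a fun x cx => Finsupp.sum b fun y cy =>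
    (cx * cy) • ∑ᶠ f ∈ {f : List ℕ | IsStuffle [rk x, rk y] f ∧ P (rk x) (rk y) f},
      q ^ (f.length - rk f - c) • Finsupp.single (wcomp f (cat x y)) (1 : 𝕂)

/-- `≻_q`. -/
noncomputable def succQ (q : 𝕂) : V 𝕂 → V 𝕂 → V 𝕂 :=
  stOp 𝕂 q 0 fun r s f => ent f r < ent f (r + s)

/-- `≺_q`. -/
noncomputable def precQ (q : 𝕂) : V 𝕂 → V 𝕂 → V 𝕂 :=
  stOp 𝕂 q 0 fun r s f => ent f (r + s) < ent f r

/-- `·_q`. -/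
noncomputable def dotQ (q : 𝕂) : V 𝕂 → V 𝕂 → V 𝕂 :=
  stOp 𝕂 q 1 fun r s f => ent f r = ent f (r + s)

/-- `≽_q = ≻_q + q ·_q`. -/
noncomputable def succcQ (q : 𝕂) (a b : V 𝕂) : V 𝕂 := succQ 𝕂 q a b + q • dotQ 𝕂 q a b

/-- `ω^{≺_q}`. -/
noncomputable def omPrecQ (q : 𝕂) : List (V 𝕂) → V 𝕂
  | [] => 0
  | [a] => a
  | a :: as => precQ 𝕂 q a (omPrecQ q as)

/-- `ω^{≽_q}`. -/
noncomputable def omSucccQ (q : 𝕂) : List (V 𝕂) → V 𝕂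
  | [] => 0
  | a :: as => as.foldl (succcQ 𝕂 q) a

/-- `ω^{≺_q}(l) ≽_q x ≺_q ω^{≽_q}(r)`, empty factors omitted. -/
noncomputable def mtermQ (q : 𝕂) (x : V 𝕂) : List (V 𝕂) → List (V 𝕂) → V 𝕂
  | [], [] => x
  | [], r => precQ 𝕂 q x (omSucccQ 𝕂 q r)
  | l, [] => succcQ 𝕂 q (omPrecQ 𝕂 q l) x
  | l, r => precQ 𝕂 q (succcQ 𝕂 q (omPrecQ 𝕂 q l) x) (omSucccQ 𝕂 q r)

/-- the brace operation `M^{ST(q)}_{1k}`. -/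
noncomputable def braceMQ (q : 𝕂) (x : V 𝕂) (ys : List (V 𝕂)) : V 𝕂 :=
  ∑ j ∈ Finset.range (ys.length + 1),
    ((-1 : 𝕂) ^ (ys.length - j)) • mtermQ 𝕂 q x (ys.take j) (ys.drop j)

/-- the shuffle product of two basis elements. -/
noncomputable def shufSingle (x y : List ℕ) : V 𝕂 :=
  ∑ᶠ f ∈ {f : List ℕ | IsShuffle [rk x, rk y] f},
    Finsupp.single (wcomp f (cat x y)) (1 : 𝕂)

/-- the shuffle product `*` on `𝕂[ST]`, as a bilinear map. -/
noncomputable def shufL : V 𝕂 →ₗ[𝕂] V 𝕂 →ₗ[𝕂] V 𝕂 :=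
  Finsupp.lsum 𝕂 fun x => LinearMap.toSpanSingleton 𝕂 _
    (Finsupp.lsum 𝕂 fun y => LinearMap.toSpanSingleton 𝕂 _ (shufSingle 𝕂 x y))

/-- the augmented space `𝕂·1 ⊕ 𝕂[ST]`. -/
abbrev Vp := 𝕂 × V 𝕂

/-- inclusion `𝕂[ST] ↪ 𝕂·1 ⊕ 𝕂[ST]`. -/
noncomputable def inclV : V 𝕂 →ₗ[𝕂] Vp 𝕂 := LinearMap.inr 𝕂 𝕂 (V 𝕂)

/-- the unit `1`. -/
noncomputable def oneVp : Vp 𝕂 := (1, 0)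

/-- the unital extension of the shuffle product to `𝕂·1 ⊕ 𝕂[ST]`, as a bilinear map:
    `(a + x)(b + y) = ab + (a y + b x + x * y)`.  In particular `1 * u = u = u * 1`. -/
noncomputable def mulVp : Vp 𝕂 →ₗ[𝕂] Vp 𝕂 →ₗ[𝕂] Vp 𝕂 :=
  LinearMap.mk₂ 𝕂 (fun u v => (u.1 * v.1, u.1 • v.2 + v.1 • u.2 + shufL 𝕂 u.2 v.2))
    (fun u u' v => by
      refine Prod.ext ?_ ?_ <;>
        simp [add_mul, add_smul, smul_add, map_add, LinearMap.add_apply] <;> abel)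
    (fun c u v => by
      refine Prod.ext ?_ ?_ <;>
        simp [mul_assoc, mul_smul, smul_add, smul_comm c v.1] <;> abel)
    (fun u v v' => by
      refine Prod.ext ?_ ?_ <;>
        simp [mul_add, add_smul, smul_add, map_add, LinearMap.add_apply] <;> abel)
    (fun c u v => by
      refine Prod.ext ?_ ?_ <;>
        simp [mul_left_comm, mul_smul, smul_add, smul_comm c u.1] <;> abel)

/-- the extension `Δ⁺` of `Δ` to `𝕂·1 ⊕ 𝕂[ST]`, with `Δ⁺(1) = 1 ⊗ 1` and
    `Δ⁺(x) = x ⊗ 1 + 1 ⊗ x + Δ(x)` for `x ∈ 𝕂[ST]`. -/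
noncomputable def DeltaP : Vp 𝕂 →ₗ[𝕂] TensorProduct 𝕂 (Vp 𝕂) (Vp 𝕂) :=
  (LinearMap.toSpanSingleton 𝕂 _ (oneVp 𝕂 ⊗ₜ[𝕂] oneVp 𝕂)).comp (LinearMap.fst 𝕂 𝕂 (V 𝕂))
    + (((TensorProduct.mk 𝕂 (Vp 𝕂) (Vp 𝕂)).flip (oneVp 𝕂)).comp (inclV 𝕂)).comp
        (LinearMap.snd 𝕂 𝕂 (V 𝕂))
    + ((TensorProduct.mk 𝕂 (Vp 𝕂) (Vp 𝕂) (oneVp 𝕂)).comp (inclV 𝕂)).comp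
        (LinearMap.snd 𝕂 𝕂 (V 𝕂))
    + ((TensorProduct.map (inclV 𝕂) (inclV 𝕂)).comp (Delta 𝕂)).comp (LinearMap.snd 𝕂 𝕂 (V 𝕂))

/-- componentwise product on the tensor square: `(a⊗b)·(c⊗d) = (a·c)⊗(b·d)`. -/
noncomputable def mulTsq :
    TensorProduct 𝕂 (Vp 𝕂) (Vp 𝕂) →ₗ[𝕂]
      TensorProduct 𝕂 (Vp 𝕂) (Vp 𝕂) →ₗ[𝕂] TensorProduct 𝕂 (Vp 𝕂) (Vp 𝕂) :=
  TensorProduct.lift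
    (((TensorProduct.mapBilinear (RingHom.id 𝕂) (Vp 𝕂) (Vp 𝕂) (Vp 𝕂) (Vp 𝕂)).comp (mulVp 𝕂)).compl₂
      (mulVp 𝕂))

/-- concatenation on the right with a fixed word, linearized: `x ↦ x × y`. -/
noncomputable def catR (y : List ℕ) : V 𝕂 →ₗ[𝕂] V 𝕂 :=
  Finsupp.lsum 𝕂 fun x => LinearMap.toSpanSingleton 𝕂 _ (Finsupp.single (cat x y) (1 : 𝕂))

/-- concatenation on the left with a fixed word, linearized: `y ↦ x × y`. -/
noncomputable def catL (x : List ℕ) : V 𝕂 →ₗ[𝕂] V 𝕂 :=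
  Finsupp.lsum 𝕂 fun y => LinearMap.toSpanSingleton 𝕂 _ (Finsupp.single (cat x y) (1 : 𝕂))

/-- `Sh^•(r₁,…,r_p)`: surjections onto `{1,…,R-p+1}` (where `R = r₁+…+r_p`), strictly
    increasing on each block, attaining the maximal value exactly at the block ends, and whose
    corestriction to `{1,…,R-p}` is a `(r₁-1,…,r_p-1)`-shuffle. -/
def ShBull (rs : List ℕ) (f : List ℕ) : Prop :=
  memST f rs.sum (rs.sum - rs.length + 1) ∧ blockIncr rs f ∧
    (∀ i, 1 ≤ i → i ≤ rs.sum →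
      (ent f i = rs.sum - rs.length + 1 ↔ ∃ k, k < rs.length ∧ i = (rs.take (k + 1)).sum)) ∧
    IsShuffle (rs.map (· - 1)) (corestrict f (Finset.Icc 1 (rs.sum - rs.length)))

/-! Each side of each identity is the set of `(n,m,r)`-shuffles whose maximal value `n+m+r`
sits at the end of the third, second, resp. first block.

Every `w ∈ Sh(n,m,r)` factors as `f ∘ (g × 1_r)` with `f ∈ Sh(n+m,r)`, `g ∈ Sh(n,m)`: `f` lists
the first `n+m` values of `w` in increasing order followed by the last `r`, and `g` records the
relative order of the first `n+m` values. Symmetrically `w = f ∘ (1_n × g)`. Conversely all such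
composites are `(n,m,r)`-shuffles. A two-block shuffle `f ∈ Sh(a,b)` takes its maximum at `a` or
at `a+b`, so `f(a) < f(a+b)` says that it takes it at `a+b`. Since `w(p) = f(x(p))` for the
inner factor `x`, the maximum of `w` sits at `p` exactly when `x(p)` is the position of the maximum
of `f`; this turns each condition on `(f, g)` into one on the position of the maximum of `w`. -/

open Set

theorem ent_eq_getElem {l : List ℕ} {i : ℕ} (hi : 1 ≤ i) (hil : i ≤ l.length) :
    ent l i = l[i - 1] :=
  List.getD_eq_getElem _ _ _

theorem ent_mem {l : List ℕ} {i : ℕ} (hi : 1 ≤ i) (hil : i ≤ l.length) : ent l i ∈ l := by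
  rw [ent_eq_getElem hi hil]
  exact List.getElem_mem _

theorem ent_map (F : ℕ → ℕ) {l : List ℕ} {i : ℕ} (hi : 1 ≤ i) (hil : i ≤ l.length) :
    ent (l.map F) i = F (ent l i) := by
  rw [ent_eq_getElem hi (by simpa), ent_eq_getElem hi hil, List.getElem_map]

theorem ent_wcomp (f : List ℕ) {x : List ℕ} {i : ℕ} (hi : 1 ≤ i) (hix : i ≤ x.length) :
    ent (wcomp f x) i = ent f (ent x i) :=
  ent_map _ hi hix

theorem ent_append_left {x : List ℕ} (y : List ℕ) {i : ℕ} (hi : 1 ≤ i)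
    (hix : i ≤ x.length) :
    ent (x ++ y) i = ent x i :=
  List.getD_append _ _ _ _ (by omega)

theorem ent_append_right (x y : List ℕ) {i : ℕ} (hi : 1 ≤ i) :
    ent (x ++ y) (x.length + i) = ent y i := by
  unfold ent
  rw [List.getD_append_right _ _ _ _ (by omega)]
  congr 1
  omega

theorem ent_drop (l : List ℕ) (a : ℕ) {i : ℕ} (hi : 1 ≤ i) :
    ent (l.drop a) i = ent l (a + i) := by
  unfold ent
  rw [List.getD_eq_getElem?_getD, List.getD_eq_getElem?_getD, List.getElem?_drop]
  congr 2
  omega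

theorem idW_eq_range' (k : ℕ) : idW k = List.range' 1 k := by
  rw [idW, List.range'_eq_map_range]
  simp [Nat.add_comm]

theorem length_idW (k : ℕ) : (idW k).length = k := by
  simp [idW]

theorem ent_idW {k i : ℕ} (hi : 1 ≤ i) (hik : i ≤ k) : ent (idW k) i = i := by
  rw [idW, ent_map _ hi (by simpa), ent_eq_getElem hi (by simpa), List.getElem_range]
  omega

theorem one_le_of_mem_idW {k a : ℕ} (ha : a ∈ idW k) : 1 ≤ a := by
  simp [idW] at ha
  omega

theorem length_cat (x y : List ℕ) : (cat x y).length = x.length + y.length := by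
  simp [cat]

theorem ent_cat_of_le {x : List ℕ} (y : List ℕ) {i : ℕ} (hi : i ∈ Icc 1 x.length) :
    ent (cat x y) i = ent x i :=
  ent_append_left _ hi.1 hi.2

theorem ent_cat_add (x : List ℕ) {y : List ℕ} {j : ℕ} (hj : j ∈ Icc 1 y.length) :
    ent (cat x y) (x.length + j) = rk x + ent y j := by
  rw [cat, ent_append_right _ _ hj.1, ent_map _ hj.1 hj.2, Nat.add_comm]

theorem rk_perm {l l' : List ℕ} (h : l.Perm l') : rk l = rk l' :=
  haveI : LeftCommutative (max : ℕ → ℕ → ℕ) := ⟨max_left_comm⟩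
  h.foldr_eq 0

theorem rk_range' (s N : ℕ) : rk (List.range' s (N + 1)) = s + N := by
  induction N generalizing s with
  | zero => simp [rk]
  | succ N ih =>
    rw [List.range'_succ]
    change max s (rk _) = _
    rw [ih]
    omega

theorem rk_of_perm {l : List ℕ} {N : ℕ} (h : l.Perm (List.range' 1 N)) : rk l = N := by
  rcases N with _ | N
  · rw [List.range'_zero, List.perm_nil] at h
    rw [h]
    rfl
  · rw [rk_perm h, rk_range']
    omega

theorem rk_idW (k : ℕ) : rk (idW k) = k := by
  rw [idW_eq_range']
  exact rk_of_perm (List.Perm.refl _)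

theorem mem_Icc_of_perm {l : List ℕ} {N a : ℕ} (h : l.Perm (List.range' 1 N)) (ha : a ∈ l) :
    a ∈ Icc 1 N := by
  have := h.mem_iff.1 ha
  rw [List.mem_range'_1] at this
  exact ⟨this.1, by omega⟩

theorem ent_mem_Icc_of_perm {l : List ℕ} {N i : ℕ} (h : l.Perm (List.range' 1 N))
    (hi : i ∈ Icc 1 N) : ent l i ∈ Icc 1 N :=
  mem_Icc_of_perm h (ent_mem hi.1 (by simpa [h.length_eq] using hi.2))

theorem ent_injOn_of_perm {l : List ℕ} {N : ℕ} (h : l.Perm (List.range' 1 N)) :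
    InjOn (ent l) (Icc 1 N) := by
  have hl : l.length = N := by simpa using h.length_eq
  rintro i ⟨hi, hiN⟩ j ⟨hj, hjN⟩ hij
  rw [ent_eq_getElem hi (by omega), ent_eq_getElem hj (by omega),
    (h.nodup_iff.2 List.nodup_range').getElem_inj_iff] at hij
  omega

theorem exists_ent_eq_of_perm {l : List ℕ} {N v : ℕ} (h : l.Perm (List.range' 1 N))
    (hv : v ∈ Icc 1 N) : ∃ i ∈ Icc 1 N, ent l i = v := by
  obtain ⟨k, hk, rfl⟩ := List.getElem_of_mem (h.mem_iff.2 (List.mem_range'_1.2 ⟨hv.1, by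
    have := hv.2; omega⟩))
  have hl : l.length = N := by simpa using h.length_eq
  exact ⟨k + 1, ⟨by omega, by omega⟩, by rw [ent_eq_getElem (by omega) (by omega)]; rfl⟩

theorem memST_iff_perm {l : List ℕ} {N : ℕ} (hN : 0 < N) :
    memST l N N ↔ l.Perm (List.range' 1 N) := by
  constructor
  · rintro ⟨⟨-, hmem⟩, hlen, hrk⟩
    refine ((List.subperm_of_subset List.nodup_range' fun k hk => ?_).perm_of_length_le
      (by simp [hlen])).symm
    rw [hmem, hrk]
    rw [List.mem_range'_1] at hk
    omega
  · intro h
    refine ⟨⟨fun hl => by simp [hl] at h; omega, fun k => ?_⟩, by simpa using h.length_eq,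
      rk_of_perm h⟩
    rw [h.mem_iff, List.mem_range'_1, rk_of_perm h]
    omega

theorem IsShuffle.sum_pos {ns f : List ℕ} (hf : IsShuffle ns f) : 0 < ns.sum := by
  obtain ⟨⟨⟨hne, -⟩, hlen, -⟩, -⟩ := hf
  rw [← hlen]
  exact List.length_pos_iff.2 hne

theorem IsShuffle.perm {ns f : List ℕ} (hf : IsShuffle ns f) : f.Perm (List.range' 1 ns.sum) :=
  (memST_iff_perm hf.sum_pos).1 ⟨hf.1.1, hf.1.2.1, hf.2⟩

theorem IsShuffle.perm_pair {a b : ℕ} {f : List ℕ} (hf : IsShuffle [a, b] f) :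
    f.Perm (List.range' 1 (a + b)) := by
  simpa using hf.perm

theorem IsShuffle.blockIncr {ns f : List ℕ} (hf : IsShuffle ns f) : blockIncr ns f := hf.1.2.2

theorem isShuffle_of_perm {ns f : List ℕ} (hns : 0 < ns.sum) (hp : f.Perm (List.range' 1 ns.sum))
    (hb : blockIncr ns f) : IsShuffle ns f :=
  have ⟨hst, hlen, hrk⟩ := (memST_iff_perm hns).2 hp
  ⟨⟨hst, hlen, hb⟩, hrk⟩

theorem strictMonoOn_Icc_one_iff {φ : ℕ → ℕ} {a : ℕ} :
    StrictMonoOn φ (Icc 1 a) ↔ ∀ i j, 0 < i → i < j → j ≤ a → φ i < φ j :=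
  ⟨fun h i j hi hij hj => h ⟨hi, by omega⟩ ⟨by omega, hj⟩ hij,
    fun h i hi j hj hij => h i j hi.1 hij hj.2⟩

theorem blockIncr_cons {a : ℕ} {ns f : List ℕ} :
    blockIncr (a :: ns) f ↔ StrictMonoOn (ent f) (Icc 1 a) ∧ blockIncr ns (f.drop a) := by
  simp only [blockIncr, List.length_cons, Nat.forall_lt_succ_left, List.take_zero, List.sum_nil,
    List.take_succ_cons, List.sum_cons, add_zero, strictMonoOn_Icc_one_iff]
  refine and_congr_right fun _ => forall₂_congr fun k _ => ⟨fun h i j hi hij hj => ?_,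
    fun h i j hi hij hj => ?_⟩
  · rw [ent_drop _ _ (by omega), ent_drop _ _ (by omega)]
    exact h _ _ (by omega) (by omega) (by omega)
  · have := h (i - a) (j - a) (by omega) (by omega) (by omega)
    rwa [ent_drop _ _ (by omega), ent_drop _ _ (by omega), Nat.add_sub_cancel' (by omega),
      Nat.add_sub_cancel' (by omega)] at this

theorem blockIncr_nil (f : List ℕ) : blockIncr [] f := fun k hk => absurd hk (Nat.not_lt_zero k)

theorem blockIncr_singleton {a : ℕ} {f : List ℕ} :
    blockIncr [a] f ↔ StrictMonoOn (ent f) (Icc 1 a) := by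
  rw [blockIncr_cons, and_iff_left (blockIncr_nil _)]

theorem blockIncr_append {ns ms x y : List ℕ} (hx : x.length = ns.sum) :
    blockIncr (ns ++ ms) (x ++ y) ↔ blockIncr ns x ∧ blockIncr ms y := by
  induction ns generalizing x with
  | nil =>
    rw [List.length_eq_zero_iff.1 hx]
    simp [blockIncr_nil]
  | cons a ns ih =>
    rw [List.sum_cons] at hx
    have hcongr : EqOn (ent (x ++ y)) (ent x) (Icc 1 a) := fun i hi =>
      ent_append_left y hi.1 (by have := hi.2; omega)
    rw [List.cons_append, blockIncr_cons, blockIncr_cons, List.drop_append_of_le_length (by omega),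
      ih (by simp; omega), hcongr.congr_strictMonoOn, and_assoc]

theorem blockIncr_wcomp {ns u x : List ℕ} (hu : StrictMonoOn (ent u) (Icc 1 u.length))
    (hx : ∀ v ∈ x, v ∈ Icc 1 u.length) (hlen : x.length = ns.sum) :
    blockIncr ns (wcomp u x) ↔ blockIncr ns x := by
  refine forall₂_congr fun k _ => forall₂_congr fun i j => imp_congr_right fun hi =>
    imp_congr_right fun hij => imp_congr_right fun hj => ?_
  have hsum := List.sum_take_add_sum_drop ns (k + 1)
  rw [ent_wcomp u (by omega) (by omega), ent_wcomp u (by omega) (by omega)]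
  exact hu.lt_iff_lt (hx _ (ent_mem (by omega) (by omega))) (hx _ (ent_mem (by omega) (by omega)))

theorem wcomp_append (f x y : List ℕ) : wcomp f (x ++ y) = wcomp f x ++ wcomp f y :=
  List.map_append

theorem wcomp_idW (u : List ℕ) : wcomp u (idW u.length) = u := by
  apply List.ext_getElem (by simp [wcomp, idW])
  intro i _ hi
  simp [wcomp, idW, ent, hi]

theorem wcomp_perm {u x : List ℕ} (hx : x.Perm (List.range' 1 u.length)) :
    (wcomp u x).Perm u := by
  have : (wcomp u x).Perm (wcomp u (idW u.length)) := by
    rw [idW_eq_range']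
    exact hx.map _
  rwa [wcomp_idW] at this

theorem wcomp_append_of_forall_mem {u x : List ℕ} (v : List ℕ)
    (hx : ∀ a ∈ x, a ∈ Icc 1 u.length) :
    wcomp (u ++ v) x = wcomp u x :=
  List.map_congr_left fun a ha => ent_append_left v (hx a ha).1 (hx a ha).2

theorem wcomp_append_map_add (u : List ℕ) {v x : List ℕ} (hx : ∀ a ∈ x, 1 ≤ a) :
    wcomp (u ++ v) (x.map (· + u.length)) = wcomp v x := by
  simp only [wcomp, List.map_map]
  exact List.map_congr_left fun a ha => by
    simp only [Function.comp, Nat.add_comm a, ent_append_right u v (hx a ha)]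

theorem wcomp_append_cat_idW {u v g : List ℕ} {r : ℕ} (hg : ∀ a ∈ g, a ∈ Icc 1 u.length)
    (hrk : rk g = u.length) (hv : v.length = r) :
    wcomp (u ++ v) (cat g (idW r)) = wcomp u g ++ v := by
  rw [← hv, cat, wcomp_append, wcomp_append_of_forall_mem v hg, hrk,
    wcomp_append_map_add u fun _ => one_le_of_mem_idW, wcomp_idW]

theorem wcomp_append_idW_cat {u v g : List ℕ} {n : ℕ} (hg : ∀ a ∈ g, 1 ≤ a)
    (hu : u.length = n) :
    wcomp (u ++ v) (cat (idW n) g) = u ++ wcomp v g := by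
  rw [← hu, cat, wcomp_append, rk_idW,
    wcomp_append_of_forall_mem v fun a ha => ⟨one_le_of_mem_idW ha, by simp [idW] at ha; omega⟩,
    wcomp_idW, wcomp_append_map_add u hg]

theorem strictMonoOn_ent_of_sortedLT {u : List ℕ} (hu : u.SortedLT) :
    StrictMonoOn (ent u) (Icc 1 u.length) := by
  rintro i ⟨hi, hiu⟩ j ⟨hj, hju⟩ hij
  rw [ent_eq_getElem hi hiu, ent_eq_getElem hj hju]
  exact hu.getElem_lt_getElem_of_lt (by omega)

theorem exists_sortedLT_wcomp_eq {a : List ℕ} (ha : a.Nodup) :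
    ∃ u g, u.SortedLT ∧ u.Perm a ∧ g.Perm (List.range' 1 a.length) ∧ wcomp u g = a := by
  set u := a.toFinset.sort
  have hua : u.Perm a :=
    (List.perm_ext_iff_of_nodup (Finset.sort_nodup _ _) ha).2 fun v => by simp
  have hidx : ∀ v ∈ a, u.idxOf v < a.length := fun v hv =>
    hua.length_eq ▸ List.idxOf_lt_length_iff.2 (hua.mem_iff.2 hv)
  refine ⟨u, a.map (u.idxOf · + 1), Finset.sortedLT_sort _, hua, ?_, ?_⟩
  · refine (List.subperm_of_subset ((List.nodup_map_iff_inj_on ha).2 fun v hv w _ h => ?_)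
      fun x hx => ?_).perm_of_length_le (by simp)
    · exact (List.idxOf_inj (hua.mem_iff.2 hv)).1 (by simpa using h)
    · obtain ⟨v, hv, rfl⟩ := List.mem_map.1 hx
      rw [List.mem_range'_1]
      have := hidx v hv
      omega
  · simp only [wcomp, List.map_map]
    conv_rhs => rw [← List.map_id a]
    refine List.map_congr_left fun v hv => ?_
    have := hidx v hv
    rw [Function.comp_apply, ent_eq_getElem (by omega) (by rw [hua.length_eq]; omega)]
    exact List.getElem_idxOf _

theorem exists_eq_append_of_length_eq_add {l : List ℕ} {a b : ℕ} (h : l.length = a + b) :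
    ∃ u v, l = u ++ v ∧ u.length = a ∧ v.length = b :=
  ⟨l.take a, l.drop a, (List.take_append_drop _ _).symm, by simp [h], by simp [h]⟩

theorem IsShuffle.wcomp_cat_idW {n m r : ℕ} {f g : List ℕ} (hf : IsShuffle [n + m, r] f)
    (hg : IsShuffle [n, m] g) : IsShuffle [n, m, r] (wcomp f (cat g (idW r))) := by
  have hfp := hf.perm_pair
  have hgp := hg.perm_pair
  obtain ⟨u, v, rfl, hu, hv⟩ :=
    exists_eq_append_of_length_eq_add (by simpa using hfp.length_eq)
  rw [← hu] at hgp
  have hgmem : ∀ a ∈ g, a ∈ Icc 1 u.length := fun a => mem_Icc_of_perm hgp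
  have hb := hf.blockIncr
  rw [show [n + m, r] = [n + m] ++ [r] from rfl, blockIncr_append (by simp [hu]),
    blockIncr_singleton, ← hu] at hb
  rw [wcomp_append_cat_idW hgmem (rk_of_perm hgp) hv]
  have := hg.sum_pos
  refine isShuffle_of_perm (by simp at this ⊢; omega) (((wcomp_perm hgp).append_right v).trans
    (by simpa [Nat.add_assoc] using hfp)) ?_
  rw [show [n, m, r] = [n, m] ++ [r] from rfl,
    blockIncr_append (by simp [wcomp, hgp.length_eq, hu]),
    blockIncr_wcomp hb.1 hgmem (by simp [hgp.length_eq, hu])]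
  exact ⟨hg.blockIncr, hb.2⟩

theorem IsShuffle.exists_eq_wcomp_cat_idW {n m r : ℕ} {w : List ℕ} (hnm : 0 < n + m)
    (hw : IsShuffle [n, m, r] w) :
    ∃ f g, IsShuffle [n + m, r] f ∧ IsShuffle [n, m] g ∧ w = wcomp f (cat g (idW r)) := by
  have hwp := hw.perm
  simp only [List.sum_cons, List.sum_nil, add_zero, ← Nat.add_assoc] at hwp
  obtain ⟨a, v, rfl, ha, hv⟩ :=
    exists_eq_append_of_length_eq_add (by simpa using hwp.length_eq)
  have hb := hw.blockIncr
  rw [show [n, m, r] = [n, m] ++ [r] from rfl, blockIncr_append (by simp [ha])] at hb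
  obtain ⟨u, g, hu, hua, hgp, rfl⟩ :=
    exists_sortedLT_wcomp_eq (List.nodup_append.1 (hwp.nodup_iff.2 List.nodup_range')).1
  rw [← hua.length_eq] at hgp ha
  have hgmem : ∀ a ∈ g, a ∈ Icc 1 u.length := fun a => mem_Icc_of_perm hgp
  refine ⟨u ++ v, g, isShuffle_of_perm (by simp; omega) ((hua.append_right v).trans hwp) ?_,
    isShuffle_of_perm (by simp; omega) (by simpa [ha] using hgp)
      ((blockIncr_wcomp (strictMonoOn_ent_of_sortedLT hu) hgmem
        (by simp [hgp.length_eq, ha])).1 hb.1),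
    (wcomp_append_cat_idW hgmem (rk_of_perm hgp) hv).symm⟩
  rw [show [n + m, r] = [n + m] ++ [r] from rfl, blockIncr_append (by simp [ha]),
    blockIncr_singleton, ← ha]
  exact ⟨strictMonoOn_ent_of_sortedLT hu, hb.2⟩

theorem IsShuffle.wcomp_idW_cat {n m r : ℕ} {f g : List ℕ} (hf : IsShuffle [n, m + r] f)
    (hg : IsShuffle [m, r] g) : IsShuffle [n, m, r] (wcomp f (cat (idW n) g)) := by
  have hfp := hf.perm_pair
  have hgp := hg.perm_pair
  obtain ⟨u, v, rfl, hu, hv⟩ :=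
    exists_eq_append_of_length_eq_add (by simpa using hfp.length_eq)
  rw [← hv] at hgp
  have hgmem : ∀ a ∈ g, a ∈ Icc 1 v.length := fun a => mem_Icc_of_perm hgp
  have hb := hf.blockIncr
  rw [show [n, m + r] = [n] ++ [m + r] from rfl, blockIncr_append (by simp [hu]),
    blockIncr_singleton, blockIncr_singleton, ← hv] at hb
  rw [wcomp_append_idW_cat (fun a ha => (hgmem a ha).1) hu]
  have := hg.sum_pos
  refine isShuffle_of_perm (by simp at this ⊢; omega)
    (((wcomp_perm hgp).append_left u).trans hfp) ?_
  rw [show [n, m, r] = [n] ++ [m, r] from rfl, blockIncr_append (by simp [hu]),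
    blockIncr_wcomp hb.2 hgmem (by simp [hgp.length_eq, hv]), blockIncr_singleton]
  exact ⟨hb.1, hg.blockIncr⟩

theorem IsShuffle.exists_eq_wcomp_idW_cat {n m r : ℕ} {w : List ℕ} (hmr : 0 < m + r)
    (hw : IsShuffle [n, m, r] w) :
    ∃ f g, IsShuffle [n, m + r] f ∧ IsShuffle [m, r] g ∧ w = wcomp f (cat (idW n) g) := by
  have hwp := hw.perm
  simp only [List.sum_cons, List.sum_nil, add_zero] at hwp
  obtain ⟨a, b, rfl, ha, hb⟩ :=
    exists_eq_append_of_length_eq_add (by simpa using hwp.length_eq)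
  have hbl := hw.blockIncr
  rw [show [n, m, r] = [n] ++ [m, r] from rfl, blockIncr_append (by simp [ha]),
    blockIncr_singleton] at hbl
  obtain ⟨u, g, hu, hub, hgp, rfl⟩ :=
    exists_sortedLT_wcomp_eq (List.nodup_append.1 (hwp.nodup_iff.2 List.nodup_range')).2.1
  rw [← hub.length_eq] at hgp hb
  have hgmem : ∀ a ∈ g, a ∈ Icc 1 u.length := fun a => mem_Icc_of_perm hgp
  refine ⟨a ++ u, g, isShuffle_of_perm (by simp; omega) ((hub.append_left a).trans hwp) ?_,
    isShuffle_of_perm (by simp; omega) (by simpa [hb] using hgp)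
      ((blockIncr_wcomp (strictMonoOn_ent_of_sortedLT hu) hgmem
        (by simp [hgp.length_eq, hb])).1 hbl.2),
    (wcomp_append_idW_cat (fun a ha => (hgmem a ha).1) ha).symm⟩
  rw [show [n, m + r] = [n] ++ [m + r] from rfl, blockIncr_append (by simp [ha]),
    blockIncr_singleton, blockIncr_singleton, ← hb]
  exact ⟨hbl.1, strictMonoOn_ent_of_sortedLT hu⟩

theorem eq_bound_iff_of_strictMonoOn {φ : ℕ → ℕ} {lo hi p T : ℕ}
    (hφ : StrictMonoOn φ (Icc lo hi)) (hT : φ hi ≤ T) (hp : p ∈ Icc lo hi) :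
    φ p = T ↔ φ hi = T ∧ p = hi := by
  refine ⟨fun h => ?_, fun ⟨h, hphi⟩ => hphi ▸ h⟩
  rcases hp.2.lt_or_eq with hlt | rfl
  · have := hφ hp ⟨hp.1.trans hlt.le, le_rfl⟩ hlt
    omega
  · exact ⟨h, rfl⟩

theorem IsShuffle.ent_eq_sum_iff_of_le {a b p : ℕ} {f : List ℕ} (hf : IsShuffle [a, b] f)
    (hp : p ∈ Icc 1 a) : ent f p = a + b ↔ ent f a = a + b ∧ p = a :=
  eq_bound_iff_of_strictMonoOn (blockIncr_cons.1 hf.blockIncr).1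
    (ent_mem_Icc_of_perm hf.perm_pair (i := a) ⟨hp.1.trans hp.2, Nat.le_add_right a b⟩).2 hp

theorem IsShuffle.ent_eq_sum_iff_of_lt {a b p : ℕ} {f : List ℕ} (hf : IsShuffle [a, b] f)
    (hp : p ∈ Ioc a (a + b)) : ent f p = a + b ↔ ent f (a + b) = a + b ∧ p = a + b := by
  obtain ⟨q, rfl⟩ : ∃ q, p = a + q := ⟨p - a, by have := hp.1; omega⟩
  have hq : q ∈ Icc 1 b := ⟨by have := hp.1; omega, by have := hp.2; omega⟩
  rw [← ent_drop _ _ hq.1, ← ent_drop _ _ (hq.1.trans hq.2), Nat.add_left_cancel_iff]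
  refine eq_bound_iff_of_strictMonoOn
    (blockIncr_singleton.1 (blockIncr_cons.1 hf.blockIncr).2) ?_ hq
  rw [ent_drop _ _ (hq.1.trans hq.2)]
  exact (ent_mem_Icc_of_perm hf.perm_pair ⟨by have := hq.1.trans hq.2; omega, le_rfl⟩).2

theorem IsShuffle.ent_eq_sum_or {a b : ℕ} {f : List ℕ} (hf : IsShuffle [a, b] f) :
    ent f a = a + b ∨ ent f (a + b) = a + b := by
  have := hf.sum_pos
  simp only [List.sum_cons, List.sum_nil, add_zero] at this
  obtain ⟨p, hp, hfp⟩ := exists_ent_eq_of_perm hf.perm_pair (v := a + b) ⟨this, le_rfl⟩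
  rcases le_or_gt p a with h | h
  · exact Or.inl ((hf.ent_eq_sum_iff_of_le ⟨hp.1, h⟩).1 hfp).1
  · exact Or.inr ((hf.ent_eq_sum_iff_of_lt ⟨h, hp.2⟩).1 hfp).1

theorem IsShuffle.ent_lt_ent_iff_eq_sum {a b : ℕ} {f : List ℕ} (hf : IsShuffle [a, b] f)
    (ha : 1 ≤ a) (hb : 1 ≤ b) :
    (ent f a < ent f (a + b) ↔ ent f (a + b) = a + b) ∧
      (ent f (a + b) < ent f a ↔ ent f a = a + b) := by
  have hfa := ent_mem_Icc_of_perm hf.perm_pair (i := a) ⟨ha, by omega⟩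
  have hfab := ent_mem_Icc_of_perm hf.perm_pair (i := a + b) ⟨by omega, le_rfl⟩
  have hne : ent f a ≠ ent f (a + b) := fun h => by
    have := ent_injOn_of_perm hf.perm_pair ⟨ha, by omega⟩ ⟨by omega, le_rfl⟩ h
    omega
  simp only [mem_Icc] at hfa hfab
  rcases hf.ent_eq_sum_or with h | h <;> omega

theorem ent_wcomp_cat_idW_of_le (f : List ℕ) {g : List ℕ} {r p : ℕ}
    (hp : p ∈ Icc 1 g.length) :
    ent (wcomp f (cat g (idW r))) p = ent f (ent g p) := by
  rw [ent_wcomp f hp.1 (by rw [length_cat]; exact hp.2.trans (Nat.le_add_right _ _)),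
    ent_cat_of_le _ hp]

theorem ent_wcomp_cat_idW_last (f : List ℕ) {g : List ℕ} {k r : ℕ} (hgl : g.length = k)
    (hrk : rk g = k) (hr : 1 ≤ r) : ent (wcomp f (cat g (idW r))) (k + r) = ent f (k + r) := by
  have hlast : r ∈ Icc 1 (idW r).length := ⟨hr, (length_idW r).ge⟩
  rw [← hgl, ent_wcomp f (by omega) (by rw [length_cat, length_idW]), ent_cat_add g hlast,
    ent_idW hr le_rfl, hrk, hgl]

theorem ent_wcomp_idW_cat_of_le (f g : List ℕ) {n p : ℕ} (hp : p ∈ Icc 1 n) :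
    ent (wcomp f (cat (idW n) g)) p = ent f p := by
  rw [ent_wcomp f hp.1 (by rw [length_cat, length_idW]; exact hp.2.trans (Nat.le_add_right _ _)),
    ent_cat_of_le _ (by rwa [length_idW]), ent_idW hp.1 hp.2]

theorem ent_wcomp_idW_cat_add (f : List ℕ) {g : List ℕ} {n j : ℕ}
    (hj : j ∈ Icc 1 g.length) :
    ent (wcomp f (cat (idW n) g)) (n + j) = ent f (n + ent g j) := by
  have h := ent_cat_add (idW n) hj
  rw [length_idW, rk_idW] at h
  rw [ent_wcomp f (by have := hj.1; omega)
    (by rw [length_cat, length_idW]; exact Nat.add_le_add_left hj.2 n), h]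

section LeftComposition

variable {n m r : ℕ} {f g : List ℕ}

theorem IsShuffle.ent_wcomp_cat_idW_last_eq_iff (hf : IsShuffle [n + m, r] f)
    (hg : IsShuffle [n, m] g) (hnm : 0 < n + m) (hr : 1 ≤ r) :
    ent (wcomp f (cat g (idW r))) (n + m + r) = n + m + r ↔
      ent f (n + m) < ent f (n + m + r) := by
  have hgp := hg.perm_pair
  rw [ent_wcomp_cat_idW_last f (by simpa using hgp.length_eq) (rk_of_perm hgp) hr,
    (hf.ent_lt_ent_iff_eq_sum hnm hr).1]

theorem IsShuffle.ent_wcomp_cat_idW_eq_iff_of_le {p : ℕ} (hf : IsShuffle [n + m, r] f)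
    (hg : IsShuffle [n, m] g) (hp : p ∈ Icc 1 (n + m)) (hr : 1 ≤ r) :
    ent (wcomp f (cat g (idW r))) p = n + m + r ↔
      ent f (n + m + r) < ent f (n + m) ∧ ent g p = n + m := by
  have hgp := hg.perm_pair
  have hgl : g.length = n + m := by simpa using hgp.length_eq
  rw [ent_wcomp_cat_idW_of_le f (hgl ▸ hp), hf.ent_eq_sum_iff_of_le (ent_mem_Icc_of_perm hgp hp),
    (hf.ent_lt_ent_iff_eq_sum (hp.1.trans hp.2) hr).2]

theorem IsShuffle.ent_wcomp_cat_idW_mid_eq_iff (hf : IsShuffle [n + m, r] f)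
    (hg : IsShuffle [n, m] g) (hn : 1 ≤ n) (hm : 1 ≤ m) (hr : 1 ≤ r) :
    ent (wcomp f (cat g (idW r))) (n + m) = n + m + r ↔
      ent f (n + m + r) < ent f (n + m) ∧ ent g n < ent g (n + m) := by
  rw [hf.ent_wcomp_cat_idW_eq_iff_of_le hg ⟨by omega, le_rfl⟩ hr,
    (hg.ent_lt_ent_iff_eq_sum hn hm).1]

theorem IsShuffle.ent_wcomp_cat_idW_first_eq_iff (hf : IsShuffle [n + m, r] f)
    (hg : IsShuffle [n, m] g) (hn : 1 ≤ n) (hm : 1 ≤ m) (hr : 1 ≤ r) :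
    ent (wcomp f (cat g (idW r))) n = n + m + r ↔
      ent f (n + m + r) < ent f (n + m) ∧ ent g (n + m) < ent g n := by
  rw [hf.ent_wcomp_cat_idW_eq_iff_of_le hg ⟨hn, by omega⟩ hr,
    (hg.ent_lt_ent_iff_eq_sum hn hm).2]

theorem exists_wcomp_cat_idW_iff {p : ℕ} {P : List ℕ → List ℕ → Prop} (hnm : 0 < n + m)
    (hP : ∀ f g, IsShuffle [n + m, r] f → IsShuffle [n, m] g →
      (ent (wcomp f (cat g (idW r))) p = n + m + r ↔ P f g)) (w : List ℕ) :
    (∃ f g, IsShuffle [n + m, r] f ∧ IsShuffle [n, m] g ∧ P f g ∧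
        w = wcomp f (cat g (idW r))) ↔
      IsShuffle [n, m, r] w ∧ ent w p = n + m + r := by
  constructor
  · rintro ⟨f, g, hf, hg, hfg, rfl⟩
    exact ⟨hf.wcomp_cat_idW hg, (hP f g hf hg).2 hfg⟩
  · rintro ⟨hw, hwp⟩
    obtain ⟨f, g, hf, hg, rfl⟩ := hw.exists_eq_wcomp_cat_idW hnm
    exact ⟨f, g, hf, hg, (hP f g hf hg).1 hwp, rfl⟩

end LeftComposition

section RightComposition

variable {n m r : ℕ} {f g : List ℕ}

theorem IsShuffle.ent_wcomp_idW_cat_first_eq_iff (hf : IsShuffle [n, m + r] f) (hn : 1 ≤ n)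
    (hmr : 0 < m + r) :
    ent (wcomp f (cat (idW n) g)) n = n + m + r ↔ ent f (n + m + r) < ent f n := by
  rw [Nat.add_assoc, ent_wcomp_idW_cat_of_le f g ⟨hn, le_rfl⟩,
    (hf.ent_lt_ent_iff_eq_sum hn hmr).2]

theorem IsShuffle.ent_wcomp_idW_cat_add_eq_iff {j : ℕ} (hf : IsShuffle [n, m + r] f)
    (hg : IsShuffle [m, r] g) (hj : j ∈ Icc 1 (m + r)) (hn : 1 ≤ n) :
    ent (wcomp f (cat (idW n) g)) (n + j) = n + m + r ↔
      ent f n < ent f (n + m + r) ∧ ent g j = m + r := by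
  have hgp := hg.perm_pair
  have hgl : g.length = m + r := by simpa using hgp.length_eq
  have hgj := ent_mem_Icc_of_perm hgp hj
  rw [Nat.add_assoc, ent_wcomp_idW_cat_add f (hgl ▸ hj),
    hf.ent_eq_sum_iff_of_lt ⟨by have := hgj.1; omega, by have := hgj.2; omega⟩,
    (hf.ent_lt_ent_iff_eq_sum hn (hj.1.trans hj.2)).1, Nat.add_left_cancel_iff]

theorem IsShuffle.ent_wcomp_idW_cat_mid_eq_iff (hf : IsShuffle [n, m + r] f)
    (hg : IsShuffle [m, r] g) (hn : 1 ≤ n) (hm : 1 ≤ m) (hr : 1 ≤ r) :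
    ent (wcomp f (cat (idW n) g)) (n + m) = n + m + r ↔
      ent f n < ent f (n + m + r) ∧ ent g (m + r) < ent g m := by
  rw [hf.ent_wcomp_idW_cat_add_eq_iff hg ⟨hm, by omega⟩ hn, (hg.ent_lt_ent_iff_eq_sum hm hr).2]

theorem IsShuffle.ent_wcomp_idW_cat_last_eq_iff (hf : IsShuffle [n, m + r] f)
    (hg : IsShuffle [m, r] g) (hn : 1 ≤ n) (hm : 1 ≤ m) (hr : 1 ≤ r) :
    ent (wcomp f (cat (idW n) g)) (n + m + r) = n + m + r ↔
      ent f n < ent f (n + m + r) ∧ ent g m < ent g (m + r) := by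
  have h := hf.ent_wcomp_idW_cat_add_eq_iff hg (j := m + r) ⟨by omega, le_rfl⟩ hn
  rw [(hg.ent_lt_ent_iff_eq_sum hm hr).1]
  rwa [← Nat.add_assoc] at h

theorem exists_wcomp_idW_cat_iff {p : ℕ} {P : List ℕ → List ℕ → Prop} (hmr : 0 < m + r)
    (hP : ∀ f g, IsShuffle [n, m + r] f → IsShuffle [m, r] g →
      (ent (wcomp f (cat (idW n) g)) p = n + m + r ↔ P f g)) (w : List ℕ) :
    (∃ f g, IsShuffle [n, m + r] f ∧ IsShuffle [m, r] g ∧ P f g ∧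
        w = wcomp f (cat (idW n) g)) ↔
      IsShuffle [n, m, r] w ∧ ent w p = n + m + r := by
  constructor
  · rintro ⟨f, g, hf, hg, hfg, rfl⟩
    exact ⟨hf.wcomp_idW_cat hg, (hP f g hf hg).2 hfg⟩
  · rintro ⟨hw, hwp⟩
    obtain ⟨f, g, hf, hg, rfl⟩ := hw.exists_eq_wcomp_idW_cat hmr
    exact ⟨f, g, hf, hg, (hP f g hf hg).1 hwp, rfl⟩

end RightComposition

/-- the three refined shuffle identities, where `Sh^≻(r,s)` (resp. `Sh^≺(r,s)`)
is the set of `(r,s)`-shuffles `f` with `f(r) < f(r+s)` (resp. `f(r) > f(r+s)`). -/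
theorem statement_3 (n m r : ℕ) (hn : 1 ≤ n) (hm : 1 ≤ m) (hr : 1 ≤ r) :
    ({w : List ℕ | ∃ f g, IsShuffle [n + m, r] f ∧ ent f (n + m) < ent f (n + m + r) ∧
          IsShuffle [n, m] g ∧ w = wcomp f (cat g (idW r))} =
      {w : List ℕ | ∃ f g, IsShuffle [n, m + r] f ∧ ent f n < ent f (n + m + r) ∧
          IsShuffle [m, r] g ∧ ent g m < ent g (m + r) ∧ w = wcomp f (cat (idW n) g)}) ∧
    ({w : List ℕ | ∃ f g, IsShuffle [n + m, r] f ∧ ent f (n + m + r) < ent f (n + m) ∧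
          IsShuffle [n, m] g ∧ ent g n < ent g (n + m) ∧ w = wcomp f (cat g (idW r))} =
      {w : List ℕ | ∃ f g, IsShuffle [n, m + r] f ∧ ent f n < ent f (n + m + r) ∧
          IsShuffle [m, r] g ∧ ent g (m + r) < ent g m ∧ w = wcomp f (cat (idW n) g)}) ∧
    ({w : List ℕ | ∃ f g, IsShuffle [n + m, r] f ∧ ent f (n + m + r) < ent f (n + m) ∧
          IsShuffle [n, m] g ∧ ent g (n + m) < ent g n ∧ w = wcomp f (cat g (idW r))} =
      {w : List ℕ | ∃ f g, IsShuffle [n, m + r] f ∧ ent f (n + m + r) < ent f n ∧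
          IsShuffle [m, r] g ∧ w = wcomp f (cat (idW n) g)}) := by
  have hnm : 0 < n + m := by omega
  have hmr : 0 < m + r := by omega
  refine ⟨Set.ext fun w => ?_, Set.ext fun w => ?_, Set.ext fun w => ?_⟩
  · exact (exists₂_congr fun _ _ => by tauto).trans <|
      (exists_wcomp_cat_idW_iff hnm (fun f g hf hg =>
        hf.ent_wcomp_cat_idW_last_eq_iff hg hnm hr) w).trans <|
      (exists_wcomp_idW_cat_iff hmr (fun f g hf hg =>
        hf.ent_wcomp_idW_cat_last_eq_iff hg hn hm hr) w).symm.trans <|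
      exists₂_congr fun _ _ => by tauto
  · exact (exists₂_congr fun _ _ => by tauto).trans <|
      (exists_wcomp_cat_idW_iff hnm (fun f g hf hg =>
        hf.ent_wcomp_cat_idW_mid_eq_iff hg hn hm hr) w).trans <|
      (exists_wcomp_idW_cat_iff hmr (fun f g hf hg =>
        hf.ent_wcomp_idW_cat_mid_eq_iff hg hn hm hr) w).symm.trans <|
      exists₂_congr fun _ _ => by tauto
  · exact (exists₂_congr fun _ _ => by tauto).trans <|
      (exists_wcomp_cat_idW_iff hnm (fun f g hf hg =>
        hf.ent_wcomp_cat_idW_first_eq_iff hg hn hm hr) w).trans <|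
      (exists_wcomp_idW_cat_iff hmr (fun f _ hf _ =>
        hf.ent_wcomp_idW_cat_first_eq_iff hn hmr) w).symm.trans <|
      exists₂_congr fun _ _ => by tauto

end SurjPerm
end

section
/- For any composition (n_1,…,n_p) of n, the set of shuffles Sh(n_1,…,n_p) coincides with the interval {w ∈ S_n : 1_n ≤ w ≤ ε(n_1,…,n_p)} for the weak Bruhat order on S_n, where 1_n is the identity permutation. -/
open scoped TensorProduct

namespace SurjPerm

variable (𝕂 : Type) [Field 𝕂]

/-!
For permutations, `w ≤ v` in the weak order iff every inversion of `w` is an inversion of `v`.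
A cover `f < tᵢ ∘ f` adds exactly one inversion; conversely, if `inv w ⊊ inv v`, some pair of
consecutive values of `w` is inverted in `v` (else `v ∘ w⁻¹` would be increasing), and exchanging
them is a cover towards `v`. Since `1_n` has no inversions and the inversions of `ε(n₁,…,n_p)`
are exactly the pairs of positions lying in different blocks, the interval `[1_n, ε(n₁,…,n_p)]`
consists of the permutations without inversions inside a block, i.e. of the shuffles.
-/

theorem le_rk {w : List ℕ} {k : ℕ} (h : k ∈ w) : k ≤ rk w := by
  induction w with
  | nil => cases h
  | cons a t ih =>
    rcases List.mem_cons.mp h with rfl | h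
    · exact le_max_left _ _
    · exact (ih h).trans (le_max_right _ _)

/-- Positions are `0`-indexed here (read with `getD · 0`), unlike in `ent`. -/
def inversions (w : List ℕ) : Finset (ℕ × ℕ) :=
  (Finset.range w.length ×ˢ Finset.range w.length).filter fun pq =>
    pq.1 < pq.2 ∧ w.getD pq.2 0 < w.getD pq.1 0

theorem mem_inversions {w : List ℕ} {p q : ℕ} :
    (p, q) ∈ inversions w ↔ q < w.length ∧ p < q ∧ w.getD q 0 < w.getD p 0 := by
  simp only [inversions, Finset.mem_filter, Finset.mem_product, Finset.mem_range]
  constructor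
  · rintro ⟨⟨-, hq⟩, h⟩
    exact ⟨hq, h⟩
  · rintro ⟨hq, hpq, hlt⟩
    exact ⟨⟨hpq.trans hq, hq⟩, hpq, hlt⟩

theorem length_swapVal (i : ℕ) (w : List ℕ) : (swapVal i w).length = w.length := by
  simp [swapVal]

theorem getD_swapVal {i p : ℕ} {w : List ℕ} (hp : p < w.length) :
    (swapVal i w).getD p 0 =
      if w.getD p 0 = i then i + 1 else if w.getD p 0 = i + 1 then i else w.getD p 0 := by
  rw [List.getD_eq_getElem _ _ (by simpa [length_swapVal] using hp),
    List.getD_eq_getElem _ _ hp]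
  simp [swapVal]

theorem wBCov.inversions_subset {f g : List ℕ} (h : wBCov f g) :
    inversions f ⊆ inversions g := by
  obtain ⟨i, -, -, rfl, hpos⟩ := h
  rintro ⟨p, q⟩ hpq
  obtain ⟨hq, hpq, hlt⟩ := mem_inversions.mp hpq
  have hp : p < f.length := hpq.trans hq
  have hnot : ¬ (f.getD q 0 = i ∧ f.getD p 0 = i + 1) := fun ⟨h₁, h₂⟩ =>
    absurd (hpos q p hq hp h₁ h₂) (by omega)
  rw [mem_inversions, length_swapVal, getD_swapVal hq, getD_swapVal hp]
  refine ⟨hq, hpq, ?_⟩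
  split_ifs <;> omega

theorem wBle.inversions_subset {f g : List ℕ} (h : wBle f g) : inversions f ⊆ inversions g := by
  induction h with
  | refl => exact subset_rfl
  | tail _ hcov ih => exact ih.trans hcov.inversions_subset

def IsPermWord (n : ℕ) (w : List ℕ) : Prop := w.length = n ∧ ∀ k, k ∈ w ↔ 1 ≤ k ∧ k ≤ n

theorem memST.isPermWord {n : ℕ} {w : List ℕ} (h : memST w n n) : IsPermWord n w := by
  obtain ⟨⟨-, hmem⟩, hlen, hrk⟩ := h
  exact ⟨hlen, by simpa [hrk] using hmem⟩

namespace IsPermWord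

variable {n : ℕ} {w v : List ℕ}

theorem nodup (hw : IsPermWord n w) : w.Nodup := by
  have htoFinset : w.toFinset = Finset.Icc 1 n := by ext k; simp [hw.2 k]
  refine Multiset.toFinset_card_eq_card_iff_nodup (m := (w : Multiset ℕ)) |>.mp ?_
  simpa [htoFinset] using hw.1.symm

theorem getD_mem (hw : IsPermWord n w) {p : ℕ} (hp : p < n) :
    1 ≤ w.getD p 0 ∧ w.getD p 0 ≤ n := by
  have hp' : p < w.length := hw.1 ▸ hp
  rw [List.getD_eq_getElem _ _ hp']
  exact (hw.2 _).mp (List.getElem_mem hp')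

theorem getD_inj (hw : IsPermWord n w) {p q : ℕ} (hp : p < n) (hq : q < n)
    (h : w.getD p 0 = w.getD q 0) : p = q := by
  rw [List.getD_eq_getElem _ _ (hw.1 ▸ hp), List.getD_eq_getElem _ _ (hw.1 ▸ hq)] at h
  exact hw.nodup.getElem_inj_iff.mp h

theorem exists_getD_eq (hw : IsPermWord n w) {k : ℕ} (hk₁ : 1 ≤ k) (hk₂ : k ≤ n) :
    ∃ p < n, w.getD p 0 = k := by
  obtain ⟨p, hp, hpk⟩ := List.mem_iff_getElem.mp ((hw.2 k).mpr ⟨hk₁, hk₂⟩)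
  exact ⟨p, hw.1 ▸ hp, by rw [List.getD_eq_getElem _ _ hp, hpk]⟩

theorem getD_eq_card_filter_lt (hw : IsPermWord n w) {p : ℕ} (hp : p < n) :
    w.getD p 0 = ((Finset.range n).filter fun q => w.getD q 0 < w.getD p 0).card + 1 := by
  have himage : ((Finset.range n).filter fun q => w.getD q 0 < w.getD p 0).image
      (w.getD · 0) = Finset.Ico 1 (w.getD p 0) := by
    ext k
    simp only [Finset.mem_image, Finset.mem_filter, Finset.mem_range, Finset.mem_Ico]
    constructor
    · rintro ⟨q, ⟨hq, hlt⟩, rfl⟩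
      exact ⟨(hw.getD_mem hq).1, hlt⟩
    · rintro ⟨hk₁, hk₂⟩
      obtain ⟨q, hq, rfl⟩ := hw.exists_getD_eq hk₁ (by have := (hw.getD_mem hp).2; omega)
      exact ⟨q, ⟨hq, hk₂⟩, rfl⟩
  have hinj : Set.InjOn (w.getD · 0)
      ((Finset.range n).filter fun q => w.getD q 0 < w.getD p 0 : Finset ℕ) := by
    intro q hq r hr h
    rw [Finset.mem_coe, Finset.mem_filter, Finset.mem_range] at hq hr
    exact hw.getD_inj hq.1 hr.1 h
  rw [← Finset.card_image_of_injOn hinj, himage, Nat.card_Ico]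
  have := (hw.getD_mem hp).1
  omega

theorem eq_of_lt_imp (hw : IsPermWord n w) (hv : IsPermWord n v)
    (h : ∀ p < n, ∀ q < n, w.getD p 0 < w.getD q 0 → v.getD p 0 < v.getD q 0) : w = v := by
  have hiff : ∀ p < n, ∀ q < n, w.getD q 0 < w.getD p 0 ↔ v.getD q 0 < v.getD p 0 := by
    intro p hp q hq
    refine ⟨h q hq p hp, fun hlt => ?_⟩
    rcases lt_trichotomy (w.getD q 0) (w.getD p 0) with hwlt | hweq | hwgt
    · exact hwlt
    · exact absurd (hw.getD_inj hq hp hweq) (by rintro rfl; omega)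
    · exact absurd (h p hp q hq hwgt) (by omega)
  apply List.ext_getElem (by rw [hw.1, hv.1])
  intro p hpw hpv
  have hp : p < n := hw.1 ▸ hpw
  rw [← List.getD_eq_getElem w 0 hpw, ← List.getD_eq_getElem v 0 hpv,
    hw.getD_eq_card_filter_lt hp, hv.getD_eq_card_filter_lt hp]
  congr 2
  exact Finset.filter_congr fun q hq => hiff p hp q (Finset.mem_range.mp hq)

theorem swapVal (hw : IsPermWord n w) {i : ℕ} (hi₁ : 1 ≤ i) (hi₂ : i + 1 ≤ n) :
    IsPermWord n (SurjPerm.swapVal i w) := by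
  refine ⟨by rw [length_swapVal, hw.1], fun k => ?_⟩
  simp only [SurjPerm.swapVal, List.mem_map]
  constructor
  · rintro ⟨v, hv, rfl⟩
    have := (hw.2 v).mp hv
    split_ifs <;> omega
  · intro hk
    refine ⟨if k = i then i + 1 else if k = i + 1 then i else k, (hw.2 _).mpr ?_, ?_⟩ <;>
      split_ifs <;> omega

theorem wBCov_swapVal (hw : IsPermWord n w) {p q : ℕ} (hpq : p < q) (hq : q < n)
    (hadj : w.getD q 0 = w.getD p 0 + 1) : wBCov w (SurjPerm.swapVal (w.getD p 0) w) := by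
  refine ⟨w.getD p 0, (hw.getD_mem (hpq.trans hq)).1, ?_, rfl, fun a b ha hb hva hvb => ?_⟩
  · rw [← hadj]
    exact le_rk (List.getD_eq_getElem w 0 (hw.1 ▸ hq) ▸ List.getElem_mem _)
  · rw [hw.getD_inj (hw.1 ▸ ha) (hpq.trans hq) hva,
      hw.getD_inj (hw.1 ▸ hb) hq (hvb.trans hadj.symm)]
    exact hpq

theorem inversions_swapVal (hw : IsPermWord n w) {p q : ℕ} (hpq : p < q) (hq : q < n)
    (hadj : w.getD q 0 = w.getD p 0 + 1) :
    inversions (SurjPerm.swapVal (w.getD p 0) w) = insert (p, q) (inversions w) := by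
  have hp : p < n := hpq.trans hq
  have hpos : ∀ a < n, (w.getD a 0 = w.getD p 0 ↔ a = p) ∧ (w.getD a 0 = w.getD q 0 ↔ a = q) :=
    fun a ha => ⟨⟨hw.getD_inj ha hp, by rintro rfl; rfl⟩, ⟨hw.getD_inj ha hq, by rintro rfl; rfl⟩⟩
  ext ⟨a, b⟩
  rw [Finset.mem_insert, mem_inversions, mem_inversions, length_swapVal, Prod.mk.injEq]
  by_cases hb : b < n
  · by_cases hab : a < b
    · have hb' : b < w.length := hw.1 ▸ hb
      rw [getD_swapVal hb', getD_swapVal (hab.trans hb')]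
      have := hpos a (hab.trans hb)
      have := hpos b hb
      split_ifs <;> omega
    · omega
  · have := hw.1
    omega

theorem exists_adjacent_mem_inversions (hw : IsPermWord n w) (hv : IsPermWord n v)
    (hsub : inversions w ⊆ inversions v) (hne : w ≠ v) :
    ∃ p q, p < q ∧ q < n ∧ w.getD q 0 = w.getD p 0 + 1 ∧ (p, q) ∈ inversions v := by
  by_contra! hnone
  have hstep : ∀ p < n, ∀ q < n, w.getD q 0 = w.getD p 0 + 1 → v.getD p 0 < v.getD q 0 := by
    intro p hp q hq hadj
    rcases lt_trichotomy p q with hpq | rfl | hqp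
    · have hne : v.getD p 0 ≠ v.getD q 0 := fun h => absurd (hv.getD_inj hp hq h) hpq.ne
      have := hnone p q hpq hq hadj
      rw [mem_inversions, hv.1] at this
      omega
    · omega
    · exact (mem_inversions.mp (hsub (mem_inversions.mpr ⟨hw.1 ▸ hp, hqp, by omega⟩))).2.2
  have hgap : ∀ k, ∀ p < n, ∀ q < n, w.getD q 0 = w.getD p 0 + k + 1 →
      v.getD p 0 < v.getD q 0 := by
    intro k
    induction k with
    | zero => exact hstep
    | succ k ih =>
      intro p hp q hq hpq
      obtain ⟨r, hr, hrval⟩ := hw.exists_getD_eq (k := w.getD p 0 + k + 1) (by omega)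
        (by have := (hw.getD_mem hq).2; omega)
      exact (ih p hp r hr hrval).trans (hstep r hr q hq (by omega))
  refine hne (hw.eq_of_lt_imp hv fun p hp q hq hlt => ?_)
  exact hgap (w.getD q 0 - w.getD p 0 - 1) p hp q hq (by omega)

theorem wBle_of_inversions_subset (hw : IsPermWord n w) (hv : IsPermWord n v)
    (hsub : inversions w ⊆ inversions v) : wBle w v := by
  induction hcard : (inversions v \ inversions w).card using Nat.strong_induction_on
    generalizing w with
  | _ m ih =>
    by_cases heq : w = v
    · exact heq ▸ Relation.ReflTransGen.refl
    obtain ⟨p, q, hpq, hq, hadj, hpqv⟩ := exists_adjacent_mem_inversions hw hv hsub heq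
    have hinv := hw.inversions_swapVal hpq hq hadj
    have hpqw : (p, q) ∉ inversions w := fun h => by
      have := (mem_inversions.mp h).2.2
      omega
    refine Relation.ReflTransGen.head (hw.wBCov_swapVal hpq hq hadj) (ih _ ?_
      (hw.swapVal (hw.getD_mem (hpq.trans hq)).1 (by have := (hw.getD_mem hq).2; omega))
      (hinv ▸ Finset.insert_subset hpqv hsub) rfl)
    rw [hinv, ← hcard, Finset.sdiff_insert]
    exact Finset.card_lt_card (Finset.erase_ssubset (Finset.mem_sdiff.mpr ⟨hpqv, hpqw⟩))

theorem wBle_iff (hw : IsPermWord n w) (hv : IsPermWord n v) :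
    wBle w v ↔ inversions w ⊆ inversions v :=
  ⟨wBle.inversions_subset, hw.wBle_of_inversions_subset hv⟩

end IsPermWord

theorem getD_idW {n p : ℕ} (hp : p < n) : (idW n).getD p 0 = p + 1 := by
  rw [idW, List.getD_eq_getElem _ _ (by simpa using hp), List.getElem_map, List.getElem_range]

theorem isPermWord_idW (n : ℕ) : IsPermWord n (idW n) := by
  refine ⟨by simp [idW], fun k => ?_⟩
  simp only [idW, List.mem_map, List.mem_range]
  exact ⟨by rintro ⟨p, hp, rfl⟩; omega, fun hk => ⟨k - 1, by omega, by omega⟩⟩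

theorem inversions_idW (n : ℕ) : inversions (idW n) = ∅ := by
  refine Finset.eq_empty_of_forall_notMem fun ⟨p, q⟩ h => ?_
  obtain ⟨hq, hpq, hlt⟩ := mem_inversions.mp h
  have hq' : q < n := by simpa [idW] using hq
  rw [getD_idW hq', getD_idW (hpq.trans hq')] at hlt
  omega

theorem sum_take_le_sum_take {ns : List ℕ} {k k' : ℕ} (h : k ≤ k') :
    (ns.take k).sum ≤ (ns.take k').sum :=
  (List.take_sublist_take_left h).sum_le_sum fun _ _ => Nat.zero_le _

theorem sum_drop_le_sum_drop {ns : List ℕ} {k k' : ℕ} (h : k ≤ k') :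
    (ns.drop k').sum ≤ (ns.drop k).sum :=
  (List.drop_sublist_drop_left ns h).sum_le_sum fun _ _ => Nat.zero_le _

theorem exists_mem_block {ns : List ℕ} {p : ℕ} (hp : p < ns.sum) :
    ∃ k < ns.length, (ns.take k).sum ≤ p ∧ p < (ns.take (k + 1)).sum := by
  induction ns generalizing p with
  | nil => simp at hp
  | cons a ns ih =>
    by_cases hpa : p < a
    · exact ⟨0, by simp, by simp, by simpa using hpa⟩
    · obtain ⟨k, hk, h₁, h₂⟩ := ih (p := p - a) (by simp at hp; omega)
      exact ⟨k + 1, by simpa using hk, by simp; omega, by simp; omega⟩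

theorem length_epsW (ns : List ℕ) : (epsW ns).length = ns.sum := by
  induction ns with
  | nil => rfl
  | cons r ns ih => simp [epsW, ih]

theorem isPermWord_epsW (ns : List ℕ) : IsPermWord ns.sum (epsW ns) := by
  refine ⟨length_epsW ns, fun k => ?_⟩
  induction ns with
  | nil => simp [epsW]; omega
  | cons r ns ih =>
    simp only [epsW, List.mem_append, List.mem_map, List.mem_range, ih, List.sum_cons]
    constructor
    · rintro (⟨p, hp, rfl⟩ | ⟨h₁, h₂⟩) <;> omega
    · intro ⟨h₁, h₂⟩
      by_cases hk : k ≤ ns.sum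
      · exact Or.inr ⟨h₁, hk⟩
      · exact Or.inl ⟨k - ns.sum - 1, by omega, by omega⟩

theorem getD_epsW {ns : List ℕ} {k p : ℕ} (hk : k < ns.length)
    (h₁ : (ns.take k).sum ≤ p) (h₂ : p < (ns.take (k + 1)).sum) :
    (epsW ns).getD p 0 = (ns.drop (k + 1)).sum + (p - (ns.take k).sum) + 1 := by
  induction ns generalizing k p with
  | nil => simp at hk
  | cons r ns ih =>
    cases k with
    | zero =>
      have hpr : p < r := by simpa using h₂
      rw [epsW, List.getD_append _ _ _ _ (by simpa using hpr),
        List.getD_eq_getElem _ _ (by simpa using hpr), List.getElem_map, List.getElem_range]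
      simp only [List.drop_succ_cons, List.drop_zero, List.take_zero, List.sum_nil]
      omega
    | succ k =>
      simp only [List.take_succ_cons, List.sum_cons] at h₁ h₂
      rw [epsW, List.getD_append_right _ _ _ _ (by simp; omega), List.length_map,
        List.length_range, ih (by simpa using hk) (by omega) (by omega)]
      simp only [List.drop_succ_cons, List.take_succ_cons, List.sum_cons]
      omega

theorem getD_epsW_lt_of_mem_block {ns : List ℕ} {k a b : ℕ} (hk : k < ns.length)
    (ha : (ns.take k).sum ≤ a) (hab : a < b) (hb : b < (ns.take (k + 1)).sum) :
    (epsW ns).getD a 0 < (epsW ns).getD b 0 := by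
  rw [getD_epsW hk ha (by omega), getD_epsW hk (by omega) hb]
  omega

theorem getD_epsW_lt_of_block_lt {ns : List ℕ} {k k' a b : ℕ} (hk' : k' < ns.length)
    (hkk' : k < k') (ha₁ : (ns.take k).sum ≤ a) (ha₂ : a < (ns.take (k + 1)).sum)
    (hb₁ : (ns.take k').sum ≤ b) (hb₂ : b < (ns.take (k' + 1)).sum) :
    (epsW ns).getD b 0 < (epsW ns).getD a 0 := by
  rw [getD_epsW (hkk'.trans hk') ha₁ ha₂, getD_epsW hk' hb₁ hb₂]
  have htake : (ns.take (k' + 1)).sum = (ns.take k').sum + ns[k'] := List.sum_take_succ _ _ hk'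
  have hdrop : (ns.drop k').sum = ns[k'] + (ns.drop (k' + 1)).sum := by
    rw [List.drop_eq_getElem_cons hk', List.sum_cons]
  have := sum_drop_le_sum_drop (ns := ns) (k := k + 1) hkk'
  omega

theorem blockIncr_iff_inversions_subset {ns w : List ℕ} (hw : IsPermWord ns.sum w) :
    blockIncr ns w ↔ inversions w ⊆ inversions (epsW ns) := by
  constructor
  · rintro hinc ⟨a, b⟩ hab
    obtain ⟨hb, hab, hlt⟩ := mem_inversions.mp hab
    have hbn : b < ns.sum := hw.1 ▸ hb
    obtain ⟨ka, hka, ha₁, ha₂⟩ := exists_mem_block (hab.trans hbn)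
    obtain ⟨kb, hkb, hb₁, hb₂⟩ := exists_mem_block hbn
    -- `w` increases inside a block, so the inverted pair straddles two blocks
    have hka_lt : ka < kb := by
      by_contra! hle
      rcases hle.lt_or_eq with hlt | rfl
      · have := sum_take_le_sum_take (ns := ns) (k := kb + 1) hlt
        omega
      · have := hinc kb hka (a + 1) (b + 1) (by omega) (by omega) (by omega)
        simp only [ent, Nat.add_sub_cancel] at this
        omega
    exact mem_inversions.mpr ⟨by rw [length_epsW]; exact hbn, hab,
      getD_epsW_lt_of_block_lt hkb hka_lt ha₁ ha₂ hb₁ hb₂⟩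
  · intro hsub k hk i j hi hij hj
    have hjn : j - 1 < ns.sum := by
      have := sum_take_le_sum_take (ns := ns) (k := k + 1) hk
      rw [List.take_length] at this
      omega
    have hne : w.getD (i - 1) 0 ≠ w.getD (j - 1) 0 := fun h =>
      absurd (hw.getD_inj (by omega) hjn h) (by omega)
    have hnot : (i - 1, j - 1) ∉ inversions w := fun h =>
      absurd (getD_epsW_lt_of_mem_block hk (by omega) (by omega) (by omega))
        (not_lt.mpr (mem_inversions.mp (hsub h)).2.2.le)
    rw [mem_inversions, hw.1] at hnot
    simp only [ent]
    omega

theorem statement_4_general (ns : List ℕ) :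
    {w : List ℕ | IsShuffle ns w} =
      {w : List ℕ | memST w ns.sum ns.sum ∧ wBle (idW ns.sum) w ∧ wBle w (epsW ns)} := by
  ext w
  suffices h : memST w ns.sum ns.sum →
      (blockIncr ns w ↔ wBle (idW ns.sum) w ∧ wBle w (epsW ns)) by
    simp only [IsShuffle, IsStuffle, memST, Set.mem_ofPred_eq] at h ⊢
    tauto
  intro hmem
  have hw := hmem.isPermWord
  rw [(isPermWord_idW _).wBle_iff hw, hw.wBle_iff (isPermWord_epsW ns), inversions_idW,
    blockIncr_iff_inversions_subset hw]
  exact (and_iff_right (Finset.empty_subset _)).symm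

/-- for any composition `(n₁,…,n_p)` of `n`, the shuffles `Sh(n₁,…,n_p)` form the
interval `{w ∈ S_n : 1_n ≤ w ≤ ε(n₁,…,n_p)}` for the weak Bruhat order. -/
theorem statement_4 (ns : List ℕ) (hne : ns ≠ []) (hpos : ∀ k ∈ ns, 1 ≤ k) :
    {w : List ℕ | IsShuffle ns w} =
      {w : List ℕ | memST w ns.sum ns.sum ∧ wBle (idW ns.sum) w ∧ wBle w (epsW ns)} :=
  statement_4_general ns

end SurjPerm
end

section
/- For all x ∈ ST_n^r and y ∈ ST_m^s, one has Δ(x×y) = Σ x_(1) ⊗ (x_(2)×y) + x ⊗ y + Σ (x×y_(1)) ⊗ y_(2) in 𝕂[ST]⊗𝕂[ST], where Δ(x) = Σ x_(1)⊗x_(2) and Δ(y) = Σ y_(1)⊗y_(2). (Equivalently, (𝕂[ST], ×, Δ) is a nonunital infinitesimal bialgebra.) -/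
/-!
In `x × y` the values `≤ rk x` are those of `x` and the values `> rk x` are those of `y` shifted
by `rk x`, and standardization only sees the relative order of values. So cutting the value range
`{1, …, rk x + rk y}` of `x × y` at `i` gives a cut of `x` (with `y` still attached on the right)
when `i < rk x`, the pair `x ⊗ y` when `i = rk x`, and a cut of `y` (with `x` attached on the
left) when `i > rk x`; these are the three terms of the identity.
-/

open scoped TensorProduct

namespace SurjPerm

variable (𝕂 : Type) [Field 𝕂]

open Finset

lemma le_rk_of_mem {l : List ℕ} {u : ℕ} (h : u ∈ l) : u ≤ rk l :=
  List.le_max_of_le h le_rfl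

lemma rk_le {l : List ℕ} {m : ℕ} (h : ∀ u ∈ l, u ≤ m) : rk l ≤ m :=
  List.max_le_of_forall_le l m h

lemma rk_mem {l : List ℕ} (h : l ≠ []) : rk l ∈ l :=
  List.maximum_mem (List.foldr_max_of_ne_nil h).symm

lemma rk_append (a b : List ℕ) : rk (a ++ b) = max (rk a) (rk b) := by
  induction a with
  | nil => rfl
  | cons u a ih => simp only [rk, List.cons_append, List.foldr_cons] at ih ⊢; rw [ih, max_assoc]

lemma rk_map_add {l : List ℕ} (h : l ≠ []) (c : ℕ) : rk (l.map (· + c)) = rk l + c :=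
  le_antisymm
    (rk_le fun _ hu => by
      obtain ⟨v, hv, rfl⟩ := List.mem_map.1 hu
      exact Nat.add_le_add_right (le_rk_of_mem hv) c)
    (le_rk_of_mem (List.mem_map_of_mem (rk_mem h)))

lemma rk_cat (x : List ℕ) {y : List ℕ} (hy : y ≠ []) : rk (cat x y) = rk x + rk y := by
  rw [cat, rk_append, rk_map_add hy]
  omega

lemma IsST.one_le_rk {x : List ℕ} (hx : IsST x) : 1 ≤ rk x :=
  ((hx.2 _).1 (rk_mem hx.1)).1

lemma IsST.zero_notMem {x : List ℕ} (hx : IsST x) : 0 ∉ x :=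
  fun h => by simpa using (hx.2 0).1 h

lemma IsST.toFinset_eq {x : List ℕ} (hx : IsST x) : x.toFinset = Icc 1 (rk x) := by
  ext k
  simp [hx.2 k]

lemma stdList_eq_map_card (l : List ℕ) :
    stdList l = l.map fun v => #{u ∈ l.toFinset | u ≤ v} :=
  rfl

lemma stdList_map_add (l : List ℕ) (c : ℕ) : stdList (l.map (· + c)) = stdList l := by
  have himage : (l.map (· + c)).toFinset = l.toFinset.image (· + c) := by ext; simp
  rw [stdList_eq_map_card, stdList_eq_map_card, List.map_map, himage]
  refine List.map_congr_left fun v _ => ?_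
  rw [Function.comp_apply, filter_image, card_image_of_injective _ (add_left_injective c)]
  simp

lemma rk_stdList (l : List ℕ) : rk (stdList l) = l.toFinset.card := by
  rcases eq_or_ne l [] with rfl | hl
  · rfl
  refine le_antisymm (rk_le fun u hu => ?_) ?_
  · rw [stdList_eq_map_card] at hu
    obtain ⟨v, -, rfl⟩ := List.mem_map.1 hu
    exact card_filter_le _ _
  · have hmem : #{u ∈ l.toFinset | u ≤ rk l} ∈ stdList l :=
      List.mem_map_of_mem (rk_mem hl)
    rw [filter_true_of_mem fun u hu => le_rk_of_mem (List.mem_toFinset.1 hu)] at hmem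
    exact le_rk_of_mem hmem

lemma stdList_append {a b : List ℕ} (h : ∀ u ∈ a, ∀ w ∈ b, u < w) :
    stdList (a ++ b) = cat (stdList a) (stdList b) := by
  rw [cat, rk_stdList]
  simp only [stdList_eq_map_card, List.map_append, List.map_map, List.toFinset_append]
  congr 1
  · refine List.map_congr_left fun u hu => ?_
    congr 1
    ext c
    simp only [mem_filter, mem_union, List.mem_toFinset]
    have := h u hu c
    grind
  · refine List.map_congr_left fun w hw => ?_
    rw [Function.comp_apply, filter_union, card_union_of_disjoint, add_comm,
      filter_true_of_mem fun c hc => (h c (List.mem_toFinset.1 hc) w hw).le]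
    exact disjoint_left.2 fun c hca hcb => by
      simp only [mem_filter, List.mem_toFinset] at hca hcb
      exact (h c hca.1 c hcb.1).false

lemma stdList_of_isST {x : List ℕ} (hx : IsST x) : stdList x = x := by
  rw [stdList_eq_map_card, hx.toFinset_eq]
  conv_rhs => rw [← List.map_id x]
  refine List.map_congr_left fun v hv => ?_
  have hv := (hx.2 v).1 hv
  have hIcc : {u ∈ Icc 1 (rk x) | u ≤ v} = Icc 1 v := by ext; simp; omega
  simp [hIcc]

lemma corestrict_self {x : List ℕ} (hx : IsST x) : corestrict x (Icc 1 (rk x)) = x := by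
  rw [corestrict, List.filter_eq_self.2 fun u hu => by simpa using (hx.2 u).1 hu,
    stdList_of_isST hx]

lemma corestrict_cat_of_le_rk (x : List ℕ) {y : List ℕ} (hy : 0 ∉ y) {a b : ℕ} (hb : b ≤ rk x) :
    corestrict (cat x y) (Icc a b) = corestrict x (Icc a b) := by
  have hright : (y.map (· + rk x)).filter (· ∈ Icc a b) = [] := by
    refine List.filter_eq_nil_iff.2 fun _ hw => ?_
    obtain ⟨v, hv, rfl⟩ := List.mem_map.1 hw
    have : v ≠ 0 := fun h => hy (h ▸ hv)
    simp only [mem_Icc, decide_eq_true_eq]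
    omega
  rw [corestrict, corestrict, cat, List.filter_append, hright, List.append_nil]

lemma corestrict_cat_Icc_add_add (x y : List ℕ) {a : ℕ} (ha : 1 ≤ a) (b : ℕ) :
    corestrict (cat x y) (Icc (rk x + a) (rk x + b)) = corestrict y (Icc a b) := by
  have hleft : x.filter (· ∈ Icc (rk x + a) (rk x + b)) = [] := by
    refine List.filter_eq_nil_iff.2 fun u hu => ?_
    have := le_rk_of_mem hu
    simp only [mem_Icc, decide_eq_true_eq]
    omega
  rw [corestrict, corestrict, cat, List.filter_append, hleft, List.nil_append, List.filter_map,
    stdList_map_add]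
  congr 1
  refine List.filter_congr fun v _ => ?_
  simp only [Function.comp_apply, mem_Icc, decide_eq_decide]
  omega

lemma corestrict_cat_Icc_straddle {x y : List ℕ} (hy : 0 ∉ y) {a : ℕ} (ha : a ≤ rk x + 1)
    (b : ℕ) :
    corestrict (cat x y) (Icc a (rk x + b)) =
      cat (corestrict x (Icc a (rk x))) (corestrict y (Icc 1 b)) := by
  have hleft : x.filter (· ∈ Icc a (rk x + b)) = x.filter (· ∈ Icc a (rk x)) :=
    List.filter_congr fun u hu => by
      have := le_rk_of_mem hu
      simp only [mem_Icc, decide_eq_decide]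
      omega
  have hright : (y.map (· + rk x)).filter (· ∈ Icc a (rk x + b)) =
      (y.filter (· ∈ Icc 1 b)).map (· + rk x) := by
    rw [List.filter_map]
    congr 1
    refine List.filter_congr fun v hv => ?_
    have : v ≠ 0 := fun h => hy (h ▸ hv)
    simp only [Function.comp_apply, mem_Icc, decide_eq_decide]
    omega
  rw [corestrict, cat, List.filter_append, hleft, hright, stdList_append, corestrict, corestrict,
    stdList_map_add]
  intro u hu w hw
  obtain ⟨v, hv, rfl⟩ := List.mem_map.1 hw
  simp only [List.mem_filter, mem_Icc, decide_eq_true_eq] at hu hv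
  omega

lemma sum_Ico_one_add {M : Type*} [AddCommMonoid M] (f : ℕ → M) {a b : ℕ} (ha : 1 ≤ a)
    (hb : 1 ≤ b) :
    ∑ i ∈ Ico 1 (a + b), f i = ∑ i ∈ Ico 1 a, f i + f a + ∑ j ∈ Ico 1 b, f (a + j) := by
  rw [← sum_Ico_consecutive f ha (Nat.le_add_right a b),
    sum_eq_sum_Ico_succ_bot (by omega : a < a + b), ← add_assoc, sum_Ico_add f 1 b a,
    add_comm 1 a, add_comm b a]

lemma Delta_single (x : List ℕ) :
    Delta 𝕂 (Finsupp.single x 1) =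
      ∑ i ∈ Ico 1 (rk x),
        Finsupp.single (corestrict x (Icc 1 i)) (1 : 𝕂) ⊗ₜ[𝕂]
          Finsupp.single (corestrict x (Icc (i + 1) (rk x))) (1 : 𝕂) := by
  simp [Delta]

lemma catR_single (x y : List ℕ) : catR 𝕂 y (Finsupp.single x 1) = Finsupp.single (cat x y) 1 := by
  simp [catR]

lemma catL_single (x y : List ℕ) : catL 𝕂 x (Finsupp.single y 1) = Finsupp.single (cat x y) 1 := by
  simp [catL]

/-- `Δ(x×y) = Σ x₍₁₎ ⊗ (x₍₂₎×y) + x ⊗ y + Σ (x×y₍₁₎) ⊗ y₍₂₎`, i.e.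
`(𝕂[ST], ×, Δ)` is a nonunital infinitesimal bialgebra. -/
theorem statement_6 (𝕂 : Type) [Field 𝕂] (x y : List ℕ) (n r m s : ℕ)
    (hx : memST x n r) (hy : memST y m s) :
    Delta 𝕂 (Finsupp.single (cat x y) 1) =
      TensorProduct.map LinearMap.id (catR 𝕂 y) (Delta 𝕂 (Finsupp.single x 1))
        + Finsupp.single x (1 : 𝕂) ⊗ₜ[𝕂] Finsupp.single y (1 : 𝕂)
        + TensorProduct.map (catL 𝕂 x) LinearMap.id (Delta 𝕂 (Finsupp.single y 1)) := by
  obtain ⟨hx, -, -⟩ := hx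
  obtain ⟨hy, -, -⟩ := hy
  have hy0 := hy.zero_notMem
  simp only [Delta_single, map_sum, TensorProduct.map_tmul, LinearMap.id_apply, catR_single,
    catL_single, rk_cat x hy.1]
  rw [sum_Ico_one_add _ hx.one_le_rk hy.one_le_rk]
  refine congrArg₂ (· + ·) (congrArg₂ (· + ·) ?_ ?_) ?_
  · refine sum_congr rfl fun i hi => ?_
    have hix := (mem_Ico.1 hi).2
    rw [corestrict_cat_of_le_rk x hy0 hix.le, corestrict_cat_Icc_straddle hy0 (by omega),
      corestrict_self hy]
  · rw [corestrict_cat_of_le_rk x hy0 le_rfl, corestrict_self hx,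
      corestrict_cat_Icc_add_add x y le_rfl, corestrict_self hy]
  · refine sum_congr rfl fun j _ => ?_
    rw [add_assoc, corestrict_cat_Icc_straddle hy0 (by omega), corestrict_self hx,
      corestrict_cat_Icc_add_add x y (by omega)]

end SurjPerm
end
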